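/- arXiv:1709.09853 — 4 statements merged into one kernel-verified Lean document; each statement's English description precedes it below -/
import Mathlib

section
/- If n is odd, then the coefficient of x in the characteristic polynomial of the adjacency matrix of the path P_n equals (n+1)/2; equivalently, the product of the n-1 nonzero eigenvalues of P_n equals (n+1)/2 up to sign as given by this coefficient. -/
/-!
Expanding `det (X • 1 - A)` along the first row twice gives the Chebyshev-type recurrence
`p (m + 2) = X * p (m + 1) - p m` for the characteristic polynomials `p m` of the paths `P_m`.
Reading off coefficients, the constant term of `p (2k)` is `(-1)^k`, and the linear coefficient
of `p (2k + 1)` satisfies `c (k + 1) = (-1)^(k + 1) - c k`, so it equals `(-1)^k (k + 1)`.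
-/

/-- Adjacency matrix of the path `P_n` on `n` vertices. -/
def pathAdj (n : ℕ) : Matrix (Fin n) (Fin n) ℝ :=
  Matrix.of fun i j => if (i : ℕ) + 1 = j ∨ (j : ℕ) + 1 = i then 1 else 0

open Polynomial SimpleGraph

namespace Matrix

variable {R : Type*} [CommRing R]

theorem det_succ_succ_of_row_col_zero {m : ℕ} (A : Matrix (Fin (m + 2)) (Fin (m + 2)) R)
    (hrow : ∀ j : Fin m, A 0 j.succ.succ = 0) (hcol : ∀ i : Fin m, A i.succ.succ 0 = 0) :
    A.det = A 0 0 * (A.submatrix Fin.succ Fin.succ).det -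
      A 0 1 * A 1 0 * (A.submatrix (Fin.succ ∘ Fin.succ) (Fin.succ ∘ Fin.succ)).det := by
  have hminor : (A.submatrix Fin.succ (Fin.succAbove 1)).det =
      A 1 0 * (A.submatrix (Fin.succ ∘ Fin.succ) (Fin.succ ∘ Fin.succ)).det := by
    rw [det_succ_column_zero, Fin.sum_univ_succ]
    simp [hcol, Function.comp_def]
  rw [det_succ_row_zero, Fin.sum_univ_succ, Fin.sum_univ_succ]
  simp [hrow, hminor]
  ring

variable {n : Type*} [Fintype n] [DecidableEq n] {m : Type*} [Fintype m] [DecidableEq m]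

theorem charmatrix_submatrix (M : Matrix n n R) {e : m → n} (he : Function.Injective e) :
    (charmatrix M).submatrix e e = charmatrix (M.submatrix e e) := by
  ext i j
  rcases eq_or_ne i j with rfl | hij
  · simp
  · simp [charmatrix_apply_ne _ _ _ hij, charmatrix_apply_ne _ _ _ (he.ne hij)]

end Matrix

namespace SimpleGraph

-- `pathGraph` is defined through `hasse`, which carries no decidability instance.
instance (n : ℕ) : DecidableRel (pathGraph n).Adj := fun _ _ => decidable_of_iff' _ pathGraph_adj

variable (R : Type*) [CommRing R]

theorem adjMatrix_pathGraph_submatrix_succ (m : ℕ) :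
    ((pathGraph (m + 1)).adjMatrix R).submatrix Fin.succ Fin.succ = (pathGraph m).adjMatrix R := by
  ext i j
  simp [adjMatrix_apply, pathGraph_adj]

theorem charpoly_adjMatrix_pathGraph_add_two (m : ℕ) :
    ((pathGraph (m + 2)).adjMatrix R).charpoly =
      X * ((pathGraph (m + 1)).adjMatrix R).charpoly - ((pathGraph m).adjMatrix R).charpoly := by
  rw [Matrix.charpoly, Matrix.det_succ_succ_of_row_col_zero]
  · rw [Matrix.charmatrix_submatrix _ (Fin.succ_injective _),
      ← Matrix.submatrix_submatrix, Matrix.charmatrix_submatrix _ (Fin.succ_injective _),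
      Matrix.charmatrix_submatrix _ (Fin.succ_injective _)]
    simp [adjMatrix_pathGraph_submatrix_succ, Matrix.charpoly, pathGraph_adj, sub_eq_add_neg]
  · intro j
    rw [Matrix.charmatrix_apply_ne _ _ _ (Fin.succ_ne_zero _).symm]
    simp [pathGraph_adj]
  · intro i
    rw [Matrix.charmatrix_apply_ne _ _ _ (Fin.succ_ne_zero _)]
    simp [pathGraph_adj]

theorem charpoly_adjMatrix_pathGraph_one : ((pathGraph 1).adjMatrix R).charpoly = X := by
  have : (pathGraph 1).adjMatrix R = 0 := by
    ext i j
    simp [adjMatrix_apply, pathGraph_adj]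
  simp [this, Matrix.charpoly_zero]

theorem coeff_zero_charpoly_adjMatrix_pathGraph_two_mul (k : ℕ) :
    ((pathGraph (2 * k)).adjMatrix R).charpoly.coeff 0 = (-1) ^ k := by
  induction k with
  | zero => simp [Matrix.charpoly_isEmpty]
  | succ k ih =>
    rw [Nat.mul_succ, charpoly_adjMatrix_pathGraph_add_two, coeff_sub, mul_coeff_zero, ih]
    simp [pow_succ]

theorem coeff_one_charpoly_adjMatrix_pathGraph_two_mul_add_one (k : ℕ) :
    ((pathGraph (2 * k + 1)).adjMatrix R).charpoly.coeff 1 = (-1) ^ k * (k + 1) := by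
  induction k with
  | zero => simp [charpoly_adjMatrix_pathGraph_one]
  | succ k ih =>
    rw [show 2 * (k + 1) + 1 = 2 * k + 1 + 2 by ring, charpoly_adjMatrix_pathGraph_add_two,
      coeff_sub, coeff_X_mul, show 2 * k + 1 + 1 = 2 * (k + 1) by ring,
      coeff_zero_charpoly_adjMatrix_pathGraph_two_mul, ih]
    push_cast
    ring

end SimpleGraph

theorem pathAdj_eq_adjMatrix_pathGraph (n : ℕ) : pathAdj n = (pathGraph n).adjMatrix ℝ := by
  ext i j
  simp [pathAdj, adjMatrix_apply, pathGraph_adj]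

/-- For odd `n`, the coefficient of `x` in the characteristic polynomial of `P_n`
(the product of the `n-1` nonzero eigenvalues, up to the sign `(-1)^((n-1)/2)`)
equals `(n+1)/2`. -/
theorem charpoly_coeff_one_pathAdj_odd (n : ℕ) (hn : Odd n) :
    (pathAdj n).charpoly.coeff 1 = (-1 : ℝ) ^ ((n - 1) / 2) * (((n : ℝ) + 1) / 2) := by
  obtain ⟨k, rfl⟩ := hn
  rw [pathAdj_eq_adjMatrix_pathGraph, coeff_one_charpoly_adjMatrix_pathGraph_two_mul_add_one,
    show (2 * k + 1 - 1) / 2 = k by omega]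
  push_cast
  ring
end

section
/- Let B be a real symmetric n×n matrix whose first two rows (and columns) are equal, and let B' be the (n-1)×(n-1) matrix obtained from B by deleting the first row and column. Then det(B) = 0 and the coefficient of x in the characteristic polynomial of B equals, up to sign, 2·det(B'); more precisely, the multiset of eigenvalues of B is the multiset of eigenvalues of B'' together with 0, where det(B'') = 2·det(B'). -/
/-!
Subtracting row `1` from row `0` and then adding column `0` to column `1` is a conjugation by a
transvection; since rows `0, 1` and columns `0, 1` of `B` agree, it makes row `0` vanish, and
expanding along that row gives `charpoly B = X * charpoly (B' D²)` with `D = diag(√2, 1, …, 1)`.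
Finally `B' D²` and `B'' = D B' D` have the same characteristic polynomial, as `XY` and `YX` do.
-/

open Matrix Polynomial

namespace Matrix

variable {R : Type*} [CommRing R] {n : ℕ}

theorem charpoly_eq_X_mul_charpoly_submatrix_succ_of_row_zero
    (M : Matrix (Fin (n + 1)) (Fin (n + 1)) R) (h : ∀ j, M 0 j = 0) :
    M.charpoly = X * (M.submatrix Fin.succ Fin.succ).charpoly := by
  have hsub : (charmatrix M).submatrix Fin.succ Fin.succ
      = charmatrix (M.submatrix Fin.succ Fin.succ) := by
    ext i j
    simp [charmatrix_apply, diagonal_apply, Fin.succ_inj]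
  rw [charpoly, det_succ_row_zero, Fin.sum_univ_succ, Fintype.sum_eq_zero]
  · simp [h, hsub, charpoly, Fin.succAbove_zero]
  · intro j
    simp [h, (Fin.succ_ne_zero j).symm]

theorem charpoly_transvection_conj {m : Type*} [Fintype m] [DecidableEq m] {i j : m}
    (hij : i ≠ j) (c : R) (B : Matrix m m R) :
    (transvection i j (-c) * B * transvection i j c).charpoly = B.charpoly := by
  rw [charpoly_mul_comm, ← Matrix.mul_assoc, transvection_mul_transvection_same i j hij,
    add_neg_cancel, transvection_zero, Matrix.one_mul]

theorem charpoly_eq_X_mul_charpoly_of_row_eq_of_col_eq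
    (B : Matrix (Fin (n + 2)) (Fin (n + 2)) R)
    (hrow : ∀ j, B 0 j = B 1 j) (hcol : ∀ i, B i 0 = B i 1) :
    B.charpoly = X * (B.submatrix Fin.succ Fin.succ *
      diagonal fun i => if i = 0 then 2 else 1).charpoly := by
  set T : Matrix (Fin (n + 2)) (Fin (n + 2)) R := transvection 0 1 (-1) * B
  set N := T * transvection 0 1 1
  have hT0 : ∀ j, T 0 j = 0 := fun j => by simp [T, hrow]
  have hT : ∀ i j, T (Fin.succ i) j = B i.succ j := fun i j =>
    transvection_mul_apply_of_ne _ _ _ _ (Fin.succ_ne_zero i) _ _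
  have hN0 : ∀ j, N 0 j = 0 := by
    intro j
    by_cases hj : j = 1 <;> simp [N, hj, hT0]
  have hNsub : N.submatrix Fin.succ Fin.succ =
      B.submatrix Fin.succ Fin.succ * diagonal fun i => if i = 0 then 2 else 1 := by
    ext i j
    cases j using Fin.cases with
    | zero =>
      simp only [N, submatrix_apply, Fin.succ_zero_eq_one, mul_transvection_apply_same, hT,
        mul_diagonal, if_pos, hcol]
      ring
    | succ j =>
      have hj : j.succ.succ ≠ (1 : Fin (n + 2)) := fun h =>
        Fin.succ_ne_zero j (Fin.succ_injective _ (h.trans Fin.succ_zero_eq_one.symm))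
      simp [N, hT, hj]
  rw [← charpoly_transvection_conj Fin.zero_ne_one 1 B,
    charpoly_eq_X_mul_charpoly_submatrix_succ_of_row_zero _ hN0, hNsub]

theorem charpoly_diagonal_mul_mul_diagonal {m : Type*} [Fintype m] [DecidableEq m]
    (d : m → R) (M : Matrix m m R) :
    (diagonal d * M * diagonal d).charpoly = (M * diagonal fun i => d i * d i).charpoly := by
  rw [Matrix.mul_assoc, charpoly_mul_comm, Matrix.mul_assoc, diagonal_mul_diagonal]

end Matrix

/-- If a symmetric matrix `B` has its first two rows (and columns) equal, then
`det B = 0` and, letting `B'` be `B` with the first row and column deleted and `B''`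
be `B'` with its first row and column multiplied by `√2`, the eigenvalues of `B` are
those of `B''` together with `0`, and `det B'' = 2 det B'`. -/
theorem eigenvalues_of_repeated_row (n : ℕ) (B : Matrix (Fin (n + 2)) (Fin (n + 2)) ℝ)
    (hsym : B.IsSymm) (hrow : ∀ j, B 0 j = B 1 j) :
    B.det = 0 ∧
    (let B' : Matrix (Fin (n + 1)) (Fin (n + 1)) ℝ := B.submatrix Fin.succ Fin.succ
     let B'' : Matrix (Fin (n + 1)) (Fin (n + 1)) ℝ :=
       Matrix.of fun i j =>
         (if i = 0 then Real.sqrt 2 else 1) * (if j = 0 then Real.sqrt 2 else 1) * B' i j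
     B''.det = 2 * B'.det ∧ B.charpoly = Polynomial.X * B''.charpoly) := by
  refine ⟨det_zero_of_row_eq Fin.zero_ne_one (funext hrow), ?_⟩
  intro B' B''
  set s : Fin (n + 1) → ℝ := fun i => if i = 0 then √2 else 1
  have hB'' : B'' = diagonal s * B' * diagonal s := by
    ext i j
    simp only [B'', s, of_apply, mul_diagonal, diagonal_mul]
    ring
  have hs : (fun i => s i * s i) = fun i => if i = 0 then 2 else 1 := by
    ext i
    by_cases hi : i = 0 <;> simp [s, hi]
  have hcol : ∀ i, B i 0 = B i 1 := fun i => by rw [hsym.apply, hsym.apply 1, hrow]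
  constructor
  · rw [hB'', det_mul, det_mul, det_diagonal, Fin.prod_univ_succ]
    simp only [s, ↓reduceIte, Fin.succ_ne_zero, Finset.prod_const_one, mul_one]
    rw [mul_right_comm, Real.mul_self_sqrt zero_le_two]
  · rw [charpoly_eq_X_mul_charpoly_of_row_eq_of_col_eq B hrow hcol, hB'',
      charpoly_diagonal_mul_mul_diagonal, hs]
end

section
/- Let t ≥ 1 and m ≥ 0, and let H_t^{t+m} be the signed graph consisting of an unbalanced 4-cycle C_4^-, a path P_t one of whose end vertices is joined to a vertex v of C_4^-, and a path P_{t+m} one of whose end vertices is joined to the vertex opposite to v on C_4^-. Then the spectrum of H_t^{t+m} is the multiset {2·cos((2i-1)π/(2(t+m+2))) : i = 1,...,t+m+2} ∪ {2·cos((2i-1)π/(2t+4)) : i = 1,...,t+2}. -/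
/-- Adjacency matrix of the signed graph `H_t^{t+m}`: an unbalanced 4-cycle `C_4⁻` with a
path `P_t` attached to one vertex and a path `P_{t+m}` attached to the opposite vertex.
The vertices `0, …, 2t+m+2` form a path (vertices `0, …, t-1` are `P_t`, vertex `t` and
vertex `t+2` are opposite vertices of the 4-cycle, vertex `t+1` is a cycle vertex, and
vertices `t+3, …, 2t+m+2` are `P_{t+m}`); the last vertex `2t+m+3` is the fourth cycle
vertex, joined positively to `t` and negatively to `t+2`. -/
def Hmat (t m : ℕ) : Matrix (Fin (2 * t + m + 4)) (Fin (2 * t + m + 4)) ℝ :=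
  Matrix.of fun i j =>
    if ((i : ℕ) + 1 = j ∧ (j : ℕ) ≤ 2 * t + m + 2) ∨
        ((j : ℕ) + 1 = i ∧ (i : ℕ) ≤ 2 * t + m + 2) then 1
    else if ((i : ℕ) = 2 * t + m + 3 ∧ (j : ℕ) = t) ∨
        ((j : ℕ) = 2 * t + m + 3 ∧ (i : ℕ) = t) then 1
    else if ((i : ℕ) = 2 * t + m + 3 ∧ (j : ℕ) = t + 2) ∨
        ((j : ℕ) = 2 * t + m + 3 ∧ (i : ℕ) = t + 2) then -1
    else 0

/-!
The cycle vertices `t + 1` and `2t + m + 3` have the same two neighbours `t` and `t + 2`, joined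
with signs `(+, +)` and `(+, -)`. Conjugating by the orthogonal reflection that replaces them by
`(e_{t+1} ± e_{2t+m+3}) / √2` disconnects the signed graph into two paths, on `t + 2` and
`t + m + 2` vertices, each with a single edge of weight `√2` at one end. Expanding along that end,
such a path on `n` vertices has characteristic polynomial `X S_{n-1} - 2 S_{n-2} = C_n`, the
rescaled Chebyshev polynomial `2 T_n (X / 2)`, whose roots are `2 cos ((2k + 1) π / 2n)`.
-/

open Polynomial Matrix Real

namespace Polynomial.Chebyshev

theorem monic_C_and_natDegree_C (R : Type*) [CommRing R] [Nontrivial R] :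
    ∀ n : ℕ, (C R (n + 1)).Monic ∧ (C R (n + 1)).natDegree = n + 1
  | 0 => by simp
  | 1 => by
    rw [Nat.cast_one, one_add_one_eq_two, C_two]
    exact ⟨by monicity!, by compute_degree!⟩
  | n + 2 => by
    obtain ⟨hm, hd⟩ : (C R (n + 2)).Monic ∧ (C R (n + 2)).natDegree = n + 2 := by
      have := monic_C_and_natDegree_C R (n + 1)
      push_cast [add_assoc, one_add_one_eq_two] at this
      exact this
    have hX : (X * C R (n + 2)).natDegree = n + 3 := by
      rw [monic_X.natDegree_mul hm, natDegree_X, hd]; omega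
    have hlt : (C R (n + 1)).natDegree < (X * C R (n + 2)).natDegree := by
      rw [(monic_C_and_natDegree_C R n).2, hX]; omega
    push_cast
    rw [show (n : ℤ) + 2 + 1 = n + 1 + 2 by ring, C_add_two, add_assoc, one_add_one_eq_two]
    exact ⟨(monic_X.mul hm).sub_of_left (degree_lt_degree hlt), by
      rw [natDegree_sub_eq_left_of_natDegree_lt hlt, hX]⟩

theorem C_real_eq_prod_X_sub_C (n : ℕ) (hn : n ≠ 0) :
    C ℝ n = ∏ k ∈ Finset.range n,
      (X - Polynomial.C (2 * cos ((2 * k + 1) * π / (2 * n)))) := by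
  set root : ℕ → ℝ := fun k => 2 * cos ((2 * k + 1) * π / (2 * n))
  obtain ⟨hmonic, hdeg⟩ : (C ℝ n).Monic ∧ (C ℝ n).natDegree = n := by
    obtain ⟨k, rfl⟩ := Nat.exists_eq_succ_of_ne_zero hn
    exact_mod_cast monic_C_and_natDegree_C ℝ k
  have hinj : Set.InjOn root (Finset.range n) := fun i hi j hj h =>
    (Finset.range n).nodup_map_iff_injOn.mp (roots_T_real_nodup n) hi hj
      (mul_left_cancel₀ two_ne_zero h)
  have hcard : ((Finset.range n).image root).card = n := by
    rw [Finset.card_image_of_injOn hinj, Finset.card_range]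
  have hroots : (C ℝ n).roots = ((Finset.range n).image root).val := by
    refine roots_eq_of_degree_eq_card (fun x hx => ?_) ?_
    · obtain ⟨k, -, rfl⟩ := Finset.mem_image.mp hx
      rw [C_two_mul_real_cos, Int.cast_natCast,
        cos_eq_zero_iff.mpr ⟨k, by field_simp; push_cast; ring⟩, mul_zero]
    · rw [hcard, degree_eq_natDegree hmonic.ne_zero, hdeg]
  rw [← prod_multiset_X_sub_C_of_monic_of_roots_card_eq hmonic (by rw [hroots, hdeg]; exact hcard),
    hroots, ← Finset.prod_eq_multiset_prod, Finset.prod_image hinj]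

end Polynomial.Chebyshev

section PairReflection

variable {ι R : Type*} [DecidableEq ι] [CommRing R]

def pairReflection (p q : ι) (c : R) : Matrix ι ι R :=
  let I : Matrix ι ι R := 1
  of fun i j =>
    if i = p then c * (I p j + I q j) else if i = q then c * (I p j - I q j) else I i j

variable {p q : ι} (c : R)

theorem pairReflection_transpose (hpq : p ≠ q) :
    (pairReflection p q c)ᵀ = pairReflection p q c := by
  ext i j
  simp only [pairReflection, transpose_apply, of_apply, one_apply]
  by_cases hip : i = p <;> by_cases hjp : j = p <;> by_cases hiq : i = q <;>
    by_cases hjq : j = q <;> simp_all [eq_comm]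

variable [Fintype ι]

theorem pairReflection_mul_apply (A : Matrix ι ι R) (i j : ι) :
    (pairReflection p q c * A) i j =
      if i = p then c * (A p j + A q j) else if i = q then c * (A p j - A q j) else A i j := by
  simp only [mul_apply, pairReflection, of_apply]
  split_ifs <;> simp [one_apply, add_mul, sub_mul, Finset.sum_add_distrib,
    Finset.sum_sub_distrib, mul_add, mul_sub]

theorem mul_pairReflection_apply (hpq : p ≠ q) (A : Matrix ι ι R) (i j : ι) :
    (A * pairReflection p q c) i j =
      if j = p then c * (A i p + A i q) else if j = q then c * (A i p - A i q) else A i j := by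
  rw [← transpose_apply (A * _), transpose_mul, pairReflection_transpose c hpq,
    pairReflection_mul_apply]
  simp only [transpose_apply]

theorem pairReflection_mul_self (hpq : p ≠ q) (hc : 2 * c ^ 2 = 1) :
    pairReflection p q c * pairReflection p q c = 1 := by
  ext i j
  rw [pairReflection_mul_apply]
  simp only [pairReflection, of_apply, if_true, if_neg hpq.symm, one_apply]
  by_cases hjp : j = p <;> by_cases hjq : j = q <;> split_ifs <;> subst_vars <;>
    simp_all <;> linear_combination hc

theorem charpoly_pairReflection_mul_mul_pairReflection (hpq : p ≠ q) (hc : 2 * c ^ 2 = 1)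
    (A : Matrix ι ι R) :
    (pairReflection p q c * A * pairReflection p q c).charpoly = A.charpoly := by
  rw [mul_assoc, charpoly_mul_comm, mul_assoc, pairReflection_mul_self c hpq hc, mul_one]

end PairReflection

theorem Matrix.charmatrix_submatrix_s16 {ι κ R : Type*} [Fintype ι] [DecidableEq ι] [Fintype κ]
    [DecidableEq κ] [CommRing R] (A : Matrix ι ι R) {e : κ → ι} (he : Function.Injective e) :
    (charmatrix A).submatrix e e = charmatrix (A.submatrix e e) := by
  ext i j : 1
  by_cases h : i = j
  · simp [h]
  · simp [charmatrix_apply_ne _ _ _ h, charmatrix_apply_ne _ _ _ (he.ne h)]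

theorem Matrix.charpoly_submatrix_of_bijective {ι κ R : Type*} [Fintype ι] [DecidableEq ι]
    [Fintype κ] [DecidableEq κ] [CommRing R] (A : Matrix ι ι R) {e : κ → ι}
    (he : Function.Bijective e) : (A.submatrix e e).charpoly = A.charpoly :=
  charpoly_reindex (Equiv.ofBijective e he).symm A

section WeightedPath

variable {R : Type*} [CommRing R]

def weightedPathMatrix (w : ℕ → R) (n : ℕ) : Matrix (Fin n) (Fin n) R :=
  Matrix.of fun i j => if (i : ℕ) + 1 = j then w i else if (j : ℕ) + 1 = i then w j else 0

theorem weightedPathMatrix_submatrix_succ (w : ℕ → R) (n : ℕ) :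
    (weightedPathMatrix w (n + 1)).submatrix Fin.succ Fin.succ =
      weightedPathMatrix (fun k => w (k + 1)) n := by
  ext i j
  simp only [weightedPathMatrix, submatrix_apply, of_apply, Fin.val_succ, Nat.add_right_cancel_iff]

theorem charpoly_weightedPathMatrix_add_two (w : ℕ → R) (n : ℕ) :
    (weightedPathMatrix w (n + 2)).charpoly =
      X * (weightedPathMatrix (fun k => w (k + 1)) (n + 1)).charpoly -
        Polynomial.C (w 0 ^ 2) * (weightedPathMatrix (fun k => w (k + 2)) n).charpoly := by
  have hfar : ∀ i j : Fin (n + 2), (i : ℕ) + 2 ≤ j ∨ (j : ℕ) + 2 ≤ i →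
      charmatrix (weightedPathMatrix w (n + 2)) i j = 0 := by
    intro i j h
    rw [charmatrix_apply_ne _ _ _ (by omega)]
    simp only [weightedPathMatrix, of_apply]
    rw [if_neg (by omega), if_neg (by omega), map_zero, neg_zero]
  have hshift : (charmatrix (weightedPathMatrix w (n + 2))).submatrix Fin.succ Fin.succ =
      charmatrix (weightedPathMatrix (fun k => w (k + 1)) (n + 1)) := by
    rw [charmatrix_submatrix_s16 _ (Fin.succ_injective _), weightedPathMatrix_submatrix_succ]
  have hshift2 : (charmatrix (weightedPathMatrix w (n + 2))).submatrix (Fin.succ ∘ Fin.succ)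
      (Fin.succ ∘ Fin.succ) = charmatrix (weightedPathMatrix (fun k => w (k + 2)) n) := by
    rw [← submatrix_submatrix, hshift, charmatrix_submatrix_s16 _ (Fin.succ_injective _),
      weightedPathMatrix_submatrix_succ]
  have hminor : ((charmatrix (weightedPathMatrix w (n + 2))).submatrix Fin.succ
      (Fin.succAbove 1)).det =
      -Polynomial.C (w 0) * (weightedPathMatrix (fun k => w (k + 2)) n).charpoly := by
    -- its first column has the single nonzero entry `-w 0`, at the top
    rw [det_succ_column_zero, Fin.sum_univ_succ, Finset.sum_eq_zero fun i _ => by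
      rw [submatrix_apply, hfar _ _ (by simp), mul_zero, zero_mul], add_zero, submatrix_submatrix,
      Fin.succAbove_zero,
      show Fin.succAbove 1 ∘ Fin.succ = Fin.succ ∘ Fin.succ from funext Fin.one_succAbove_succ,
      hshift2, submatrix_apply, Fin.one_succAbove_zero, Fin.succ_zero_eq_one,
      charmatrix_apply_ne _ _ _ Fin.zero_ne_one.symm]
    simp [weightedPathMatrix, charpoly]
  rw [charpoly, det_succ_row_zero, Fin.sum_univ_succ, Fin.sum_univ_succ,
    Finset.sum_eq_zero fun j _ => by rw [hfar _ _ (by simp), mul_zero, zero_mul], add_zero,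
    Fin.succAbove_zero, hshift, Fin.succ_zero_eq_one, hminor, charmatrix_apply_eq,
    charmatrix_apply_ne _ _ _ Fin.zero_ne_one]
  simp [weightedPathMatrix, charpoly]
  ring

theorem charpoly_weightedPathMatrix_one : ∀ n : ℕ,
    (weightedPathMatrix (fun _ => (1 : R)) n).charpoly = Chebyshev.S R n
  | 0 => by simp
  | 1 => by
    rw [show weightedPathMatrix (fun _ => (1 : R)) 1 = 0 by ext i j; simp [weightedPathMatrix]]
    simp
  | n + 2 => by
    rw [charpoly_weightedPathMatrix_add_two, charpoly_weightedPathMatrix_one (n + 1),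
      charpoly_weightedPathMatrix_one n]
    push_cast
    rw [Chebyshev.S_add_two]
    simp

theorem charpoly_weightedPathMatrix_update_zero (a : R) (n : ℕ) :
    (weightedPathMatrix (Function.update (fun _ => 1) 0 a) (n + 2)).charpoly =
      X * Chebyshev.S R (n + 1) - Polynomial.C (a ^ 2) * Chebyshev.S R n := by
  simp [charpoly_weightedPathMatrix_add_two, charpoly_weightedPathMatrix_one]

theorem charpoly_weightedPathMatrix_update_zero_of_sq_eq_two {a : R} (ha : a ^ 2 = 2) (n : ℕ) :
    (weightedPathMatrix (Function.update (fun _ => 1) 0 a) (n + 2)).charpoly =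
      Chebyshev.C R (n + 2 : ℕ) := by
  push_cast
  rw [charpoly_weightedPathMatrix_update_zero, ha, Chebyshev.C_eq_S_sub_X_mul_S,
    show (n : ℤ) + 2 - 1 = n + 1 by ring, Chebyshev.S_add_two, map_ofNat]
  ring

end WeightedPath

namespace Hmat

variable (t m : ℕ)

def p : Fin (2 * t + m + 4) := ⟨t + 1, by omega⟩
def q : Fin (2 * t + m + 4) := ⟨2 * t + m + 3, by omega⟩

theorem p_val : (p t m : ℕ) = t + 1 := rfl
theorem q_val : (q t m : ℕ) = 2 * t + m + 3 := rfl

theorem p_ne_q : p t m ≠ q t m := by rw [Ne, Fin.ext_iff, p_val, q_val]; omega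

theorem isSymm : (Hmat t m).IsSymm := by
  ext i j
  simp only [Hmat, transpose_apply, of_apply]
  split_ifs <;> first | rfl | omega

theorem apply_p_left (j : Fin (2 * t + m + 4)) :
    Hmat t m (p t m) j = if (j : ℕ) = t ∨ (j : ℕ) = t + 2 then 1 else 0 := by
  simp only [Hmat, p, of_apply]
  split_ifs <;> first | rfl | omega

theorem apply_q_left (j : Fin (2 * t + m + 4)) :
    Hmat t m (q t m) j = if (j : ℕ) = t then 1 else if (j : ℕ) = t + 2 then -1 else 0 := by
  simp only [Hmat, q, of_apply, true_and]
  split_ifs <;> first | rfl | omega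

theorem apply_p_right (i : Fin (2 * t + m + 4)) :
    Hmat t m i (p t m) = if (i : ℕ) = t ∨ (i : ℕ) = t + 2 then 1 else 0 := by
  rw [(isSymm t m).apply, apply_p_left]

theorem apply_q_right (i : Fin (2 * t + m + 4)) :
    Hmat t m i (q t m) = if (i : ℕ) = t then 1 else if (i : ℕ) = t + 2 then -1 else 0 := by
  rw [(isSymm t m).apply, apply_q_left]

noncomputable def splitMatrix : Matrix (Fin (2 * t + m + 4)) (Fin (2 * t + m + 4)) ℝ :=
  of fun i j =>
    if i = p t m ∨ i = q t m ∨ j = p t m ∨ j = q t m then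
      if (i = p t m ∧ (j : ℕ) = t) ∨ (j = p t m ∧ (i : ℕ) = t) ∨
          (i = q t m ∧ (j : ℕ) = t + 2) ∨ (j = q t m ∧ (i : ℕ) = t + 2) then √2 else 0
    else Hmat t m i j

theorem pairReflection_conj :
    pairReflection (p t m) (q t m) (√2 / 2) * Hmat t m * pairReflection (p t m) (q t m) (√2 / 2) =
      splitMatrix t m := by
  have hpp : Hmat t m (p t m) (p t m) = 0 := by rw [apply_p_left, p_val, if_neg (by omega)]
  have hpq : Hmat t m (p t m) (q t m) = 0 := by rw [apply_p_left, q_val, if_neg (by omega)]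
  have hqp : Hmat t m (q t m) (p t m) = 0 := by
    rw [apply_q_left, p_val, if_neg (by omega), if_neg (by omega)]
  have hqq : Hmat t m (q t m) (q t m) = 0 := by
    rw [apply_q_left, q_val, if_neg (by omega), if_neg (by omega)]
  ext i j
  rw [mul_pairReflection_apply _ (p_ne_q t m), pairReflection_mul_apply, pairReflection_mul_apply,
    pairReflection_mul_apply]
  simp only [hpp, hpq, hqp, hqq, apply_p_left, apply_q_left, apply_p_right, apply_q_right,
    splitMatrix, of_apply, Fin.ext_iff, p_val, q_val]
  split_ifs <;> first | rfl | omega | ring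

-- The first block lists `p, t, t - 1, …, 0`, the second `q, t + 2, t + 3, …, 2t + m + 2`.
def blockEmbedding : Fin (t + 2) ⊕ Fin (t + m + 2) → Fin (2 * t + m + 4) :=
  Sum.elim (fun k => ⟨t + 1 - k, by omega⟩)
    (fun k => ⟨if (k : ℕ) = 0 then 2 * t + m + 3 else t + 1 + k, by split_ifs <;> omega⟩)

theorem bijective_blockEmbedding : Function.Bijective (blockEmbedding t m) := by
  refine (Fintype.bijective_iff_injective_and_card _).mpr ⟨?_, by simp; omega⟩
  rintro (⟨k, hk⟩ | ⟨k, hk⟩) (⟨l, hl⟩ | ⟨l, hl⟩) h <;>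
    simp only [blockEmbedding, Sum.elim_inl, Sum.elim_inr, Fin.ext_iff, Sum.inl.injEq,
      Sum.inr.injEq, reduceCtorEq] at h ⊢ <;> (try split_ifs at h) <;> omega

theorem splitMatrix_submatrix_blockEmbedding :
    (splitMatrix t m).submatrix (blockEmbedding t m) (blockEmbedding t m) =
      fromBlocks (weightedPathMatrix (Function.update (fun _ => 1) 0 √2) (t + 2)) 0 0
        (weightedPathMatrix (Function.update (fun _ => 1) 0 √2) (t + m + 2)) := by
  ext (k | k) (l | l) <;>
  simp only [submatrix_apply, blockEmbedding, Sum.elim_inl, Sum.elim_inr, fromBlocks_apply₁₁,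
    fromBlocks_apply₁₂, fromBlocks_apply₂₁, fromBlocks_apply₂₂, splitMatrix, Hmat,
    weightedPathMatrix, of_apply, Matrix.zero_apply, Fin.ext_iff, p_val, q_val,
    Function.update_apply] <;>
  split_ifs <;> first | rfl | omega

end Hmat

theorem eigenvalues_Hmat_general (t m : ℕ) :
    (Hmat t m).charpoly =
      (∏ i ∈ Finset.range (t + m + 2),
        (Polynomial.X - Polynomial.C
          (2 * Real.cos ((2 * (i : ℝ) + 1) * Real.pi / (2 * ((t : ℝ) + (m : ℝ) + 2)))))) *
      (∏ i ∈ Finset.range (t + 2),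
        (Polynomial.X - Polynomial.C
          (2 * Real.cos ((2 * (i : ℝ) + 1) * Real.pi / (2 * (t : ℝ) + 4))))) := by
  have hsq : √2 ^ 2 = 2 := Real.sq_sqrt zero_le_two
  have hc : 2 * (√2 / 2) ^ 2 = 1 := by rw [div_pow, hsq]; norm_num
  rw [← charpoly_pairReflection_mul_mul_pairReflection _ (Hmat.p_ne_q t m) hc,
    Hmat.pairReflection_conj,
    ← charpoly_submatrix_of_bijective _ (Hmat.bijective_blockEmbedding t m),
    Hmat.splitMatrix_submatrix_blockEmbedding, charpoly_fromBlocks_zero₁₂,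
    charpoly_weightedPathMatrix_update_zero_of_sq_eq_two hsq,
    charpoly_weightedPathMatrix_update_zero_of_sq_eq_two hsq, mul_comm,
    Chebyshev.C_real_eq_prod_X_sub_C _ (by omega), Chebyshev.C_real_eq_prod_X_sub_C _ (by omega)]
  congr 1 <;> refine Finset.prod_congr rfl fun k _ => ?_ <;> congr 4 <;> push_cast <;> ring

/-- The spectrum of `H_t^{t+m}` is `{2 cos((2i-1)π/(2(t+m+2))) : i = 1, …, t+m+2}`
together with `{2 cos((2i-1)π/(2t+4)) : i = 1, …, t+2}`. -/
theorem eigenvalues_Hmat (t m : ℕ) (ht : 1 ≤ t) :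
    (Hmat t m).charpoly =
      (∏ i ∈ Finset.range (t + m + 2),
        (Polynomial.X - Polynomial.C
          (2 * Real.cos ((2 * (i : ℝ) + 1) * Real.pi / (2 * ((t : ℝ) + (m : ℝ) + 2)))))) *
      (∏ i ∈ Finset.range (t + 2),
        (Polynomial.X - Polynomial.C
          (2 * Real.cos ((2 * (i : ℝ) + 1) * Real.pi / (2 * (t : ℝ) + 4))))) :=
  eigenvalues_Hmat_general t m
end

section
/- Let K be the s×s tridiagonal matrix with diagonal (3, 2, 2, ..., 2, 1) and all super- and sub-diagonal entries equal to 1. Then the eigenvalues of K are 2 + 2·cos((2j-1)π/(2s)) for j = 1, ..., s. -/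
/-!
Put `u n = cos ((n + 1/2) θ)` for `n : ℤ`. Every such sequence satisfies
`u (n-1) + 2 u n + u (n+1) = (2 + 2 cos θ) u n`. The corner entries `3` and `1` of `K` are exactly
the boundary conditions `u (-1) = u 0` and `u s = -u (s-1)` that make `(u 0, …, u (s-1))` an
eigenvector of `K`; the first always holds, the second holds when `cos (s θ) = 0`, i.e. for
`θ = (2j+1)π/(2s)`. These give `s` distinct eigenvalues, hence all roots of the degree-`s`
characteristic polynomial.
-/

open Polynomial Real Matrix

theorem Polynomial.eq_prod_X_sub_C_of_monic_of_natDegree_le {R ι : Type*} [CommRing R]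
    [IsDomain R] {p : R[X]} (hp : p.Monic) {t : Finset ι} {f : ι → R}
    (hf : Set.InjOn f t) (hroot : ∀ i ∈ t, p.IsRoot (f i)) (hdeg : p.natDegree ≤ t.card) :
    p = ∏ i ∈ t, (X - C (f i)) := by
  classical
  rw [← Finset.prod_image (f := fun a => X - C a) hf]
  have hdvd : ∏ a ∈ t.image f, (X - C a) ∣ p := by
    refine (Multiset.prod_X_sub_C_dvd_iff_le_roots hp.ne_zero _).2 ?_
    refine (Multiset.le_iff_subset (t.image f).nodup).2 fun a ha => ?_
    obtain ⟨i, hi, rfl⟩ := Finset.mem_image.1 ha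
    exact (mem_roots hp.ne_zero).2 (hroot i hi)
  refine eq_of_monic_of_dvd_of_natDegree_le (monic_prod_X_sub_C _ _) hp hdvd ?_
  simpa [natDegree_prod_of_monic (t.image f) (fun a : R => X - C a) fun a _ => monic_X_sub_C a,
    Finset.card_image_of_injOn hf] using hdeg

theorem Matrix.isRoot_charpoly_of_mulVec_eq_smul {n K : Type*} [Fintype n] [DecidableEq n]
    [Field K] {A : Matrix n n K} {μ : K} {v : n → K} (hv : v ≠ 0) (h : A *ᵥ v = μ • v) :
    A.charpoly.IsRoot μ := by
  rw [← Matrix.charpoly_toLin', ← Module.End.hasEigenvalue_iff_isRoot_charpoly]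
  exact Module.End.hasEigenvalue_of_hasEigenvector ⟨Module.End.mem_eigenspace_iff.2 h, hv⟩

theorem mulVec_apply_of_tridiagonal {s : ℕ} {K : Matrix (Fin s) (Fin s) ℝ}
    (hoff : ∀ i j : Fin s, (i : ℕ) + 1 = j → K i j = 1 ∧ K j i = 1)
    (hzero : ∀ i j : Fin s, (i : ℕ) ≠ j → (i : ℕ) + 1 ≠ j → (j : ℕ) + 1 ≠ i → K i j = 0)
    (u : ℤ → ℝ) (i : Fin s) :
    (K *ᵥ fun k => u k) i =
      (if (i : ℕ) ≠ 0 then u (i - 1) else 0) + K i i * u i +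
        (if (i : ℕ) + 1 < s then u (i + 1) else 0) := by
  have hterm : ∀ k : Fin s, K i k * u k =
      (if (k : ℕ) + 1 = i then u k else 0) + (if k = i then K i i * u k else 0) +
        (if (i : ℕ) + 1 = k then u k else 0) := by
    intro k
    by_cases hlow : (k : ℕ) + 1 = i
    · have hk : k ≠ i := by rintro rfl; omega
      simp [hlow, hk, (hoff k i hlow).2, show (i : ℕ) + 1 ≠ k by omega]
    by_cases hdiag : k = i
    · subst hdiag; simp
    by_cases hup : (i : ℕ) + 1 = k
    · simp [hlow, hdiag, hup, (hoff i k hup).1]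
    · simp [hlow, hdiag, hup, hzero i k (fun h => hdiag (Fin.ext h).symm) hup hlow]
  have hlower : (∑ k : Fin s, if (k : ℕ) + 1 = i then u k else 0) =
      if (i : ℕ) ≠ 0 then u (i - 1) else 0 := by
    split_ifs with hi
    · rw [Fintype.sum_eq_single ⟨i - 1, by omega⟩ fun k hk =>
        if_neg fun h => hk (Fin.ext (by simp; omega))]
      simp [show (i : ℕ) - 1 + 1 = i by omega, Nat.cast_sub (Nat.one_le_iff_ne_zero.2 hi)]
    · exact Finset.sum_eq_zero fun k _ => if_neg (by omega)
  have hupper : (∑ k : Fin s, if (i : ℕ) + 1 = k then u k else 0) =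
      if (i : ℕ) + 1 < s then u (i + 1) else 0 := by
    split_ifs with hi
    · rw [Fintype.sum_eq_single ⟨i + 1, hi⟩ fun k hk =>
        if_neg fun h => hk (Fin.ext (by simp; omega))]
      simp
    · exact Finset.sum_eq_zero fun k _ => if_neg (by omega)
  rw [mulVec, dotProduct, Fintype.sum_congr _ _ hterm, Finset.sum_add_distrib,
    Finset.sum_add_distrib, hlower, hupper, Finset.sum_ite_eq']
  simp

theorem mulVec_apply_of_tridiagK {s : ℕ} {K : Matrix (Fin s) (Fin s) ℝ}
    (hfirst : ∀ i : Fin s, (i : ℕ) = 0 → K i i = 3)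
    (hlast : ∀ i : Fin s, (i : ℕ) = s - 1 → K i i = 1)
    (hmid : ∀ i : Fin s, (i : ℕ) ≠ 0 → (i : ℕ) ≠ s - 1 → K i i = 2)
    (hoff : ∀ i j : Fin s, (i : ℕ) + 1 = j → K i j = 1 ∧ K j i = 1)
    (hzero : ∀ i j : Fin s, (i : ℕ) ≠ j → (i : ℕ) + 1 ≠ j → (j : ℕ) + 1 ≠ i → K i j = 0)
    {u : ℤ → ℝ} (hleft : u (-1) = u 0) (hright : u s = -u (s - 1)) (i : Fin s) :
    (K *ᵥ fun k => u k) i = u (i - 1) + 2 * u i + u (i + 1) := by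
  rw [mulVec_apply_of_tridiagonal hoff hzero]
  by_cases h0 : (i : ℕ) = 0
  · have hnext : (i : ℕ) + 1 < s := by
      by_contra h
      have := (hfirst i h0).symm.trans (hlast i (by omega))
      norm_num at this
    have hi : ((i : ℕ) : ℤ) = 0 := by exact_mod_cast h0
    rw [if_neg (not_not_intro h0), if_pos hnext, hfirst i h0, hi, zero_sub, hleft]
    ring
  by_cases hl : (i : ℕ) = s - 1
  · have hi : ((i : ℕ) : ℤ) + 1 = s := by omega
    rw [if_pos h0, if_neg (by omega), hlast i hl, hi, hright, show (s : ℤ) - 1 = i by omega]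
    ring
  · rw [if_pos h0, if_pos (by omega), hmid i h0 hl]

theorem cos_half_shift_recurrence (θ : ℝ) (n : ℤ) :
    cos ((((n - 1 : ℤ) : ℝ) + 1 / 2) * θ) + 2 * cos ((n + 1 / 2) * θ) +
        cos ((((n + 1 : ℤ) : ℝ) + 1 / 2) * θ) = (2 + 2 * cos θ) * cos ((n + 1 / 2) * θ) := by
  push_cast
  rw [show ((n : ℝ) - 1 + 1 / 2) * θ = (n + 1 / 2) * θ - θ by ring,
    show ((n : ℝ) + 1 + 1 / 2) * θ = (n + 1 / 2) * θ + θ by ring, cos_sub, cos_add]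
  ring

theorem tridiagK_mulVec_cos_eq_smul {s : ℕ} {K : Matrix (Fin s) (Fin s) ℝ}
    (hfirst : ∀ i : Fin s, (i : ℕ) = 0 → K i i = 3)
    (hlast : ∀ i : Fin s, (i : ℕ) = s - 1 → K i i = 1)
    (hmid : ∀ i : Fin s, (i : ℕ) ≠ 0 → (i : ℕ) ≠ s - 1 → K i i = 2)
    (hoff : ∀ i j : Fin s, (i : ℕ) + 1 = j → K i j = 1 ∧ K j i = 1)
    (hzero : ∀ i j : Fin s, (i : ℕ) ≠ j → (i : ℕ) + 1 ≠ j → (j : ℕ) + 1 ≠ i → K i j = 0)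
    {θ : ℝ} (hθ : cos (s * θ) = 0) :
    (K *ᵥ fun k : Fin s => cos (((k : ℕ) + 1 / 2) * θ)) =
      (2 + 2 * cos θ) • fun k : Fin s => cos (((k : ℕ) + 1 / 2) * θ) := by
  set u : ℤ → ℝ := fun n => cos ((n + 1 / 2) * θ)
  have hleft : u (-1) = u 0 := by
    simp only [u]
    rw [← cos_neg]
    congr 1
    push_cast
    ring
  have hright : u s = -u (s - 1) := by
    simp only [u]
    push_cast
    rw [show ((s : ℝ) + 1 / 2) * θ = s * θ + θ / 2 by ring,
      show ((s : ℝ) - 1 + 1 / 2) * θ = s * θ - θ / 2 by ring, cos_add, cos_sub, hθ]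
    ring
  have hv : (fun k : Fin s => cos (((k : ℕ) + 1 / 2) * θ)) = fun k : Fin s => u k := by
    simp [u]
  rw [hv]
  funext i
  exact (mulVec_apply_of_tridiagK hfirst hlast hmid hoff hzero hleft hright i).trans
    (cos_half_shift_recurrence θ i)

noncomputable def chebyshevAngle (s j : ℕ) : ℝ := (2 * j + 1) * π / (2 * s)

theorem chebyshevAngle_mem_Ioo {s j : ℕ} (hj : j < s) : chebyshevAngle s j ∈ Set.Ioo 0 π := by
  have hs : (0 : ℝ) < s := by exact_mod_cast j.zero_le.trans_lt hj
  have hjs : 2 * (j : ℝ) + 1 < 2 * s := by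
    have : (j : ℝ) + 1 ≤ s := by exact_mod_cast hj
    linarith
  refine ⟨by unfold chebyshevAngle; positivity, (div_lt_iff₀ (by positivity)).2 ?_⟩
  nlinarith [pi_pos]

theorem cos_mul_chebyshevAngle {s : ℕ} (hs : s ≠ 0) (j : ℕ) :
    cos (s * chebyshevAngle s j) = 0 := by
  rw [show s * chebyshevAngle s j = j * π + π / 2 by unfold chebyshevAngle; field_simp,
    cos_add_pi_div_two, sin_nat_mul_pi, neg_zero]

theorem injOn_two_add_two_mul_cos_chebyshevAngle (s : ℕ) :
    Set.InjOn (fun j => 2 + 2 * cos (chebyshevAngle s j)) (Finset.range s) := by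
  intro a ha b hb hab
  have ha' := Finset.mem_range.1 ha
  have hs : (2 * s : ℝ) ≠ 0 := by simpa using (a.zero_le.trans_lt ha').ne'
  have hangle := injOn_cos (Set.Ioo_subset_Icc_self (chebyshevAngle_mem_Ioo ha'))
    (Set.Ioo_subset_Icc_self (chebyshevAngle_mem_Ioo (Finset.mem_range.1 hb)))
    (by simpa using hab)
  have : 2 * (a : ℝ) + 1 = 2 * b + 1 := by
    simpa [chebyshevAngle, div_left_inj' hs, pi_ne_zero] using hangle
  exact_mod_cast (by linarith : (a : ℝ) = b)

theorem eigenvalues_tridiagK_general (s : ℕ) (K : Matrix (Fin s) (Fin s) ℝ)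
    (hfirst : ∀ i : Fin s, (i : ℕ) = 0 → K i i = 3)
    (hlast : ∀ i : Fin s, (i : ℕ) = s - 1 → K i i = 1)
    (hmid : ∀ i : Fin s, (i : ℕ) ≠ 0 → (i : ℕ) ≠ s - 1 → K i i = 2)
    (hoff : ∀ i j : Fin s, (i : ℕ) + 1 = j → K i j = 1 ∧ K j i = 1)
    (hzero : ∀ i j : Fin s, (i : ℕ) ≠ j → (i : ℕ) + 1 ≠ j → (j : ℕ) + 1 ≠ i → K i j = 0) :
    K.charpoly =
      ∏ j ∈ Finset.range s,
        (Polynomial.X - Polynomial.C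
          (2 + 2 * Real.cos ((2 * (j : ℝ) + 1) * Real.pi / (2 * (s : ℝ))))) := by
  refine eq_prod_X_sub_C_of_monic_of_natDegree_le K.charpoly_monic
    (injOn_two_add_two_mul_cos_chebyshevAngle s) (fun j hj => ?_) (by simp)
  have hj : j < s := Finset.mem_range.1 hj
  change K.charpoly.IsRoot (2 + 2 * cos (chebyshevAngle s j))
  have hθ := chebyshevAngle_mem_Ioo hj
  refine isRoot_charpoly_of_mulVec_eq_smul (fun hv => ?_)
    (tridiagK_mulVec_cos_eq_smul hfirst hlast hmid hoff hzero
      (cos_mul_chebyshevAngle (j.zero_le.trans_lt hj).ne' j))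
  have hv0 : cos (chebyshevAngle s j / 2) = 0 := by
    simpa [div_eq_inv_mul] using congrFun hv ⟨0, j.zero_le.trans_lt hj⟩
  exact (cos_pos_of_mem_Ioo ⟨by linarith [hθ.1, pi_pos], by linarith [hθ.2]⟩).ne' hv0

/-- The eigenvalues of the `s × s` tridiagonal matrix with diagonal `(3, 2, …, 2, 1)` and
all super- and sub-diagonal entries `1` are `2 + 2 cos((2j-1)π/(2s))` for `j = 1, …, s`. -/
theorem eigenvalues_tridiagK (s : ℕ) (hs : 1 ≤ s) (K : Matrix (Fin s) (Fin s) ℝ)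
    (hfirst : ∀ i : Fin s, (i : ℕ) = 0 → K i i = 3)
    (hlast : ∀ i : Fin s, (i : ℕ) = s - 1 → K i i = 1)
    (hmid : ∀ i : Fin s, (i : ℕ) ≠ 0 → (i : ℕ) ≠ s - 1 → K i i = 2)
    (hoff : ∀ i j : Fin s, (i : ℕ) + 1 = j → K i j = 1 ∧ K j i = 1)
    (hzero : ∀ i j : Fin s, (i : ℕ) ≠ j → (i : ℕ) + 1 ≠ j → (j : ℕ) + 1 ≠ i → K i j = 0) :
    K.charpoly =
      ∏ j ∈ Finset.range s,
        (Polynomial.X - Polynomial.C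
          (2 + 2 * Real.cos ((2 * (j : ℝ) + 1) * Real.pi / (2 * (s : ℝ))))) :=
  eigenvalues_tridiagK_general s K hfirst hlast hmid hoff hzero
end
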